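/- For deep linear networks with t > 0 and L ≥ 3: if X†Y has at least two distinct nonzero singular values, then t^{−(L−2)}‖X†Y‖_{S_{2/L}} > t^{−(L−2)}‖X†Y‖_*; that is, the primal optimal value P_lin(t) strictly exceeds the dual optimal value D_lin(t), so the duality gap is nonzero. -/

import Mathlib

open Matrix

/-- The `j`-th singular value (unsorted) of a real matrix. -/
noncomputable def singVal {a b : ℕ} (M : Matrix (Fin a) (Fin b) ℝ) (j : Fin b) : ℝ :=
  Real.sqrt ((show (Mᵀ * M).IsHermitian by
    simpa using Matrix.isHermitian_conjTranspose_mul_self M).eigenvalues j)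

/-- Nuclear norm of a real matrix: sum of its singular values. -/
noncomputable def nuclearNorm {a b : ℕ} (M : Matrix (Fin a) (Fin b) ℝ) : ℝ :=
  ∑ j, singVal M j

/-- Schatten-`p` quasi-norm of a real matrix: `(∑ σ_i(M)^p)^{1/p}`. -/
noncomputable def schattenNorm {a b : ℕ} (p : ℝ) (M : Matrix (Fin a) (Fin b) ℝ) : ℝ :=
  (∑ j, singVal M j ^ p) ^ (1 / p)

/-- `Xd` is the Moore–Penrose pseudoinverse of `X` (the four Penrose conditions). -/
def IsMoorePenrose {a b : ℕ} (X : Matrix (Fin a) (Fin b) ℝ) (Xd : Matrix (Fin b) (Fin a) ℝ) : Prop :=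
  X * Xd * X = X ∧ Xd * X * Xd = Xd ∧ (X * Xd)ᵀ = X * Xd ∧ (Xd * X)ᵀ = Xd * X

/-!
For `0 < p < 1` and nonnegative `σ` with sum `s > 0`, every ratio `σ_k / s` lies in `[0, 1]`, hence
`σ_k / s ≤ (σ_k / s) ^ p`, strictly as soon as `0 < σ_k < s`, which happens when two of the `σ_k`
are positive. Summing gives `s ^ p < ∑ σ_k ^ p`, i.e. `∑ σ_k < (∑ σ_k ^ p) ^ (1 / p)`. Applied to
the singular values of `X†Y` with `p = 2 / L` this is `‖X†Y‖_* < ‖X†Y‖_{S_{2/L}}`, and the factor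
`t ^ (-(L - 2))` is positive.
-/

namespace Real

variable {ι : Type*} [Fintype ι] {f : ι → ℝ} {p : ℝ} {i j : ι}

theorem rpow_sum_lt_sum_rpow (hf : ∀ k, 0 ≤ f k) (hp1 : p < 1) (hij : i ≠ j)
    (hi : 0 < f i) (hj : 0 < f j) : (∑ k, f k) ^ p < ∑ k, f k ^ p := by
  set s := ∑ k, f k
  have hfi_add_fj : f i + f j ≤ s :=
    Finset.add_le_sum (fun k _ => hf k) (Finset.mem_univ i) (Finset.mem_univ j) hij
  have hs : 0 < s := by linarith
  have hratio_le : ∀ k, f k / s ≤ (f k / s) ^ p := fun k =>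
    self_le_rpow_of_le_one (div_nonneg (hf k) hs.le)
      ((div_le_one hs).2 (Finset.single_le_sum (fun k _ => hf k) (Finset.mem_univ k))) hp1.le
  have hratio_lt : f i / s < (f i / s) ^ p :=
    self_lt_rpow_of_lt_one (div_pos hi hs) ((div_lt_one hs).2 (by linarith)) hp1
  have hsum : 1 < ∑ k, f k ^ p / s ^ p :=
    calc 1 = ∑ k, f k / s := by rw [← Finset.sum_div, div_self hs.ne']
      _ < ∑ k, (f k / s) ^ p :=
        Finset.sum_lt_sum (fun k _ => hratio_le k) ⟨i, Finset.mem_univ i, hratio_lt⟩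
      _ = ∑ k, f k ^ p / s ^ p := by
        simp only [div_rpow (hf _) hs.le]
  rwa [← Finset.sum_div, one_lt_div (rpow_pos_of_pos hs p)] at hsum

theorem sum_lt_rpow_sum_rpow (hf : ∀ k, 0 ≤ f k) (hp : 0 < p) (hp1 : p < 1) (hij : i ≠ j)
    (hi : 0 < f i) (hj : 0 < f j) : ∑ k, f k < (∑ k, f k ^ p) ^ (1 / p) := by
  have hs : 0 ≤ ∑ k, f k := Finset.sum_nonneg fun k _ => hf k
  calc ∑ k, f k = ((∑ k, f k) ^ p) ^ (1 / p) := by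
        rw [← rpow_mul hs, mul_one_div_cancel hp.ne', rpow_one]
    _ < (∑ k, f k ^ p) ^ (1 / p) :=
      rpow_lt_rpow (rpow_nonneg hs p) (rpow_sum_lt_sum_rpow hf hp1 hij hi hj) (by positivity)

end Real

theorem singVal_nonneg {a b : ℕ} (M : Matrix (Fin a) (Fin b) ℝ) (j : Fin b) : 0 ≤ singVal M j :=
  Real.sqrt_nonneg _

theorem nuclearNorm_lt_schattenNorm {a b : ℕ} (M : Matrix (Fin a) (Fin b) ℝ) {p : ℝ}
    (hp : 0 < p) (hp1 : p < 1)
    (hdist : ∃ i j, singVal M i ≠ 0 ∧ singVal M j ≠ 0 ∧ singVal M i ≠ singVal M j) :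
    nuclearNorm M < schattenNorm p M := by
  obtain ⟨i, j, hi, hj, hij⟩ := hdist
  exact Real.sum_lt_rpow_sum_rpow (singVal_nonneg M) hp hp1 (ne_of_apply_ne _ hij)
    ((singVal_nonneg M i).lt_of_ne' hi) ((singVal_nonneg M j).lt_of_ne' hj)

theorem duality_gap_nonzero_deep_linear_general
    (N d K L : ℕ) (hL : 3 ≤ L) (t : ℝ) (ht : 0 < t)
    (Y : Matrix (Fin N) (Fin K) ℝ)
    (Xd : Matrix (Fin d) (Fin N) ℝ)
    (hdist : ∃ i j : Fin K, singVal (Xd * Y) i ≠ 0 ∧ singVal (Xd * Y) j ≠ 0 ∧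
      singVal (Xd * Y) i ≠ singVal (Xd * Y) j) :
    t ^ (-((L : ℝ) - 2)) * schattenNorm ((2 : ℝ) / L) (Xd * Y) >
      t ^ (-((L : ℝ) - 2)) * nuclearNorm (Xd * Y) := by
  have hL' : (3 : ℝ) ≤ L := by exact_mod_cast hL
  have hp : (0 : ℝ) < 2 / L := by positivity
  have hp1 : (2 : ℝ) / L < 1 := (div_lt_one (by linarith)).2 (by linarith)
  exact mul_lt_mul_of_pos_left (nuclearNorm_lt_schattenNorm _ hp hp1 hdist) (by positivity)

/-- For deep linear networks with `t > 0` and `L ≥ 3`: if `X†Y` has at least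
two distinct nonzero singular values, then
`t^{-(L-2)} ‖X†Y‖_{S_{2/L}} > t^{-(L-2)} ‖X†Y‖_*`, i.e. the primal value `P_lin(t)` strictly
exceeds the dual value `D_lin(t)`, so the duality gap is nonzero. -/
theorem duality_gap_nonzero_deep_linear
    (N d K L : ℕ) (hL : 3 ≤ L) (t : ℝ) (ht : 0 < t)
    (X : Matrix (Fin N) (Fin d) ℝ) (Y : Matrix (Fin N) (Fin K) ℝ)
    (Xd : Matrix (Fin d) (Fin N) ℝ) (hXd : IsMoorePenrose X Xd)
    (hdist : ∃ i j : Fin K, singVal (Xd * Y) i ≠ 0 ∧ singVal (Xd * Y) j ≠ 0 ∧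
      singVal (Xd * Y) i ≠ singVal (Xd * Y) j) :
    t ^ (-((L : ℝ) - 2)) * schattenNorm ((2 : ℝ) / L) (Xd * Y) >
      t ^ (-((L : ℝ) - 2)) * nuclearNorm (Xd * Y) :=
  duality_gap_nonzero_deep_linear_general N d K L hL t ht Y Xd hdist
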